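/- Let X, X₁, X₂, … be random variables where X₁, X₂, … are i.i.d., φ : Ω → ℝ^D measurable and integrable for both laws, and suppose aff(supp P_{φ(X₁)}) = aff(supp P_{φ(X)}) and supp P_{φ(X₁)} ⊇ supp P_{φ(X)}. Then almost surely there exists n with E[φ(X)] ∈ conv{φ(X₁),…,φ(X_n)}. -/

import Mathlib

/-!
Let `m` be the mean of `φ₊μ` and `A` the common affine hull of the two supports. A continuous
linear functional `f` that is not constant on `A` cannot satisfy `f ≤ f m` on `supp φ₊μ`, since
`m` is the mean, let alone on the larger `supp φ₊ν`; so in every direction of `A` some point of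
`supp φ₊ν` lies strictly beyond `m`. The unit sphere of the dual of `A.direction` is compact,
hence finitely many such points `Q` do the job with a uniform margin `r`, and the Hahn–Banach
separation theorem shows that `m` stays in the convex hull of any points of `A` that are
`r`-close to those of `Q`. Every ball around a point of `Q` has positive `φ₊ν`-mass, so by the
second Borel–Cantelli lemma the i.i.d. samples almost surely visit each of these finitely many
balls.
-/

open MeasureTheory

/-- The support of a measure: points all of whose neighborhoods have positive measure. -/
def measureSupport {E : Type*} [TopologicalSpace E] [MeasurableSpace E] (ν : Measure E) :
    Set E := {x | ∀ U ∈ nhds x, 0 < ν U}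

open ProbabilityTheory Filter Metric

theorem measureSupport_eq_support {E : Type*} [TopologicalSpace E] [MeasurableSpace E]
    (ν : Measure E) : measureSupport ν = ν.support := by
  ext x
  exact (Measure.mem_support_iff_forall x).symm

theorem vectorSpan_le_ker_of_forall_eq {k E F : Type*} [Ring k] [AddCommGroup E] [Module k E]
    [AddCommGroup F] [Module k F] {s : Set E} (f : E →ₗ[k] F) {c : F} (h : ∀ x ∈ s, f x = c) :
    vectorSpan k s ≤ LinearMap.ker f := by
  rw [vectorSpan_def, Submodule.span_le]
  rintro _ ⟨a, ha, b, hb, rfl⟩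
  simp [h a ha, h b hb]

theorem ProbabilityTheory.iIndepFun.ae_frequently_mem {Ω α : Type*} [MeasurableSpace Ω]
    [MeasurableSpace α] {P : Measure Ω} {ν : Measure α} {X : ℕ → Ω → α}
    (hXm : ∀ k, Measurable (X k)) (hindep : iIndepFun X P) (hlaw : ∀ k, P.map (X k) = ν)
    {W : Set α} (hW : MeasurableSet W) (hpos : ν W ≠ 0) :
    ∀ᵐ ω ∂P, ∃ᶠ k in atTop, X k ω ∈ W := by
  have hset : iIndepSet (fun k => X k ⁻¹' W) P :=
    iIndep_comap_mem_iff.1 (hindep.comp (fun _ x => x ∈ W) fun _ => measurable_mem.2 hW)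
  have hsum : ∑' k, P (X k ⁻¹' W) = ⊤ := by
    simp_rw [← Measure.map_apply (hXm _) hW, hlaw]
    exact ENNReal.tsum_const_eq_top_of_ne_zero hpos
  have := hset.isProbabilityMeasure
  have hlimsup := measure_limsup_eq_one (fun k => hXm k hW) hset hsum
  have hmeas : MeasurableSet (limsup (fun k => X k ⁻¹' W) atTop) :=
    .measurableSet_limsup fun k => hXm k hW
  filter_upwards [mem_ae_iff.2 ((prob_compl_eq_zero_iff hmeas).2 hlimsup)] with ω hω
  exact mem_limsup_iff_frequently_mem.1 hω

section Mean

variable {E : Type*} [NormedAddCommGroup E] [NormedSpace ℝ E] [FiniteDimensional ℝ E]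
  [MeasurableSpace E] (ρ : Measure E) [IsProbabilityMeasure ρ]

theorem integral_mem_affineSpan_support (hint : Integrable id ρ) :
    ∫ z, z ∂ρ ∈ affineSpan ℝ ρ.support := by
  refine (affineSpan ℝ ρ.support).convex.integral_mem
    (affineSpan ℝ ρ.support).closed_of_finiteDimensional ?_ hint
  filter_upwards [Measure.support_mem_ae] with z hz using subset_affineSpan ℝ _ hz

theorem exists_mem_support_apply_integral_lt (hint : Integrable id ρ) (f : StrongDual ℝ E)
    (hf : ∃ v ∈ (affineSpan ℝ ρ.support).direction, f v ≠ 0) :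
    ∃ s ∈ ρ.support, f (∫ z, z ∂ρ) < f s := by
  obtain ⟨v, hv, hfv⟩ := hf
  by_contra! hle
  set c := f (∫ z, z ∂ρ)
  have hfi : Integrable (fun z => f z) ρ := f.integrable_comp hint
  have hfc : ∫ z, f z ∂ρ = c := f.integral_comp_comm hint
  have hae : ∀ᵐ z ∂ρ, c - f z = 0 := by
    refine (integral_eq_zero_iff_of_nonneg_ae ?_ ((integrable_const c).sub hfi)).1 ?_
    · filter_upwards [Measure.support_mem_ae] with z hz using sub_nonneg.2 (hle z hz)
    · simp [integral_sub (integrable_const c) hfi, hfc]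
  have hnull : ρ {z | f z < c} = 0 :=
    measure_mono_null (fun z (hz : f z < c) => by simpa [sub_eq_zero] using hz.ne')
      (ae_iff.1 hae)
  have hconst : ∀ s ∈ ρ.support, f s = c := fun s hs =>
    (hle s hs).eq_or_lt.resolve_right fun hlt =>
      Measure.subset_compl_support_of_isOpen (isOpen_lt f.continuous continuous_const) hnull
        hlt hs
  rw [direction_affineSpan] at hv
  exact hfv (vectorSpan_le_ker_of_forall_eq (f : E →ₗ[ℝ] ℝ) hconst hv)

end Mean

section Geometry

variable {E : Type*} [NormedAddCommGroup E] [NormedSpace ℝ E]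

theorem exists_finset_forall_mul_norm_lt [FiniteDimensional ℝ E] {S : Set E}
    (h : ∀ g : StrongDual ℝ E, g ≠ 0 → ∃ s ∈ S, 0 < g s) :
    ∃ Q : Finset E, ↑Q ⊆ S ∧ ∃ r > 0, ∀ g : StrongDual ℝ E, g ≠ 0 → ∃ q ∈ Q, r * ‖g‖ < g q := by
  classical
  have := FiniteDimensional.proper_rclike ℝ (StrongDual ℝ E)
  -- thresholds `1 / (n + 1)` make the margin of a finite subcover uniform
  let U : S × ℕ → Set (StrongDual ℝ E) := fun p => {g | 1 / (p.2 + 1 : ℝ) < g p.1}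
  have hU : ∀ p, IsOpen (U p) := fun p =>
    isOpen_lt continuous_const ((ContinuousLinearMap.apply ℝ ℝ (p.1 : E)).continuous)
  have hcover : sphere (0 : StrongDual ℝ E) 1 ⊆ ⋃ p, U p := by
    intro g hg
    obtain ⟨s, hs, hgs⟩ := h g (ne_zero_of_mem_unit_sphere ⟨g, hg⟩)
    obtain ⟨n, hn⟩ := exists_nat_one_div_lt hgs
    exact Set.mem_iUnion.2 ⟨(⟨s, hs⟩, n), hn⟩
  obtain ⟨P, hP⟩ := (isCompact_sphere 0 1).elim_finite_subcover U hU hcover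
  refine ⟨P.image fun p => p.1.1, by simpa [Set.subset_def] using fun _ hs _ _ => hs,
    1 / (P.sup Prod.snd + 1), by positivity, fun g hg => ?_⟩
  have hgn : 0 < ‖g‖ := norm_pos_iff.2 hg
  have hunit : ‖g‖⁻¹ • g ∈ sphere (0 : StrongDual ℝ E) 1 := by simp [norm_smul, hgn.ne']
  obtain ⟨p, hpP, hp⟩ := Set.mem_iUnion₂.1 (hP hunit)
  refine ⟨p.1, Finset.mem_image_of_mem _ hpP, ?_⟩
  have hr : 1 / (P.sup Prod.snd + 1 : ℝ) ≤ 1 / (p.2 + 1) :=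
    one_div_le_one_div_of_le (by positivity) (by exact_mod_cast Nat.succ_le_succ (P.le_sup hpP))
  have hp' : 1 / (p.2 + 1 : ℝ) < ‖g‖⁻¹ * g p.1 := hp
  rw [lt_inv_mul_iff₀ hgn] at hp'
  nlinarith

theorem exists_add_mem_pos_of_ne_zero {V : Submodule ℝ E} {T : Set E} {m : E}
    (hT : ∀ t ∈ T, t - m ∈ V)
    (h : ∀ f : StrongDual ℝ E, (∃ v ∈ V, f v ≠ 0) → ∃ t ∈ T, f m < f t)
    (g : StrongDual ℝ V) (hg : g ≠ 0) : ∃ v ∈ {v : V | ↑v + m ∈ T}, 0 < g v := by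
  obtain ⟨f, hfg, -⟩ := exists_extension_norm_eq V g
  obtain ⟨v, hv⟩ := DFunLike.ne_iff.1 hg
  obtain ⟨t, ht, hlt⟩ := h f ⟨v, v.2, by rwa [hfg]⟩
  refine ⟨⟨t - m, hT t ht⟩, by simpa using ht, ?_⟩
  rw [← hfg]
  simpa using hlt

theorem mem_convexHull_image_of_dist_lt {A : AffineSubspace ℝ E} {m : E} (hm : m ∈ A)
    {Q : Finset E} (hQA : ↑Q ⊆ (A : Set E)) (hQ : Q.Nonempty) {r : ℝ}
    (hdir : ∀ f : StrongDual ℝ E, f.comp A.direction.subtypeL ≠ 0 →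
      ∃ q ∈ Q, r * ‖f.comp A.direction.subtypeL‖ < f (q - m))
    {y : E → E} (hy : ∀ q ∈ Q, y q ∈ A ∧ dist (y q) q < r) : m ∈ convexHull ℝ (y '' Q) := by
  by_contra hmK
  have hyK : ∀ q ∈ Q, y q ∈ convexHull ℝ (y '' Q) := fun q hq =>
    subset_convexHull ℝ _ (Set.mem_image_of_mem y hq)
  have hKA : convexHull ℝ (y '' Q) ⊆ A := by
    refine convexHull_min ?_ A.convex
    rintro _ ⟨q, hq, rfl⟩
    exact (hy q hq).1
  obtain ⟨f, u, hfm, hfK⟩ := geometric_hahn_banach_point_closed (convex_convexHull ℝ _)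
    ((Q.finite_toSet.image y).isCompact_convexHull ℝ).isClosed hmK
  set g := f.comp A.direction.subtypeL
  have hg : g ≠ 0 := fun hg0 => by
    obtain ⟨q₀, hq₀⟩ := hQ
    have hy₀ := hyK q₀ hq₀
    have : f (y q₀ - m) = 0 := congr($hg0 ⟨_, AffineSubspace.vsub_mem_direction (hKA hy₀) hm⟩)
    linarith [hfK _ hy₀, map_sub f (y q₀) m]
  obtain ⟨q, hq, hfq⟩ := hdir (-f) (by simpa [g] using hg)
  obtain ⟨hyA, hyd⟩ := hy q hq
  have hyq : y q - q ∈ A.direction := AffineSubspace.vsub_mem_direction hyA (hQA hq)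
  have hbound : f (y q - q) ≤ ‖g‖ * r :=
    calc f (y q - q) ≤ ‖g‖ * ‖y q - q‖ := (Real.le_norm_self _).trans (g.le_opNorm ⟨_, hyq⟩)
      _ ≤ ‖g‖ * r := by
          rw [← dist_eq_norm]
          gcongr
  have hnorm : ‖(-f).comp A.direction.subtypeL‖ = ‖g‖ := norm_neg g
  replace hfq : r * ‖g‖ < -f (q - m) := by rwa [hnorm] at hfq
  linarith [hfK _ (hyK q hq), map_sub f (y q) q, map_sub f q m]

theorem exists_finset_forall_mul_norm_lt_apply_sub [FiniteDimensional ℝ E]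
    {A : AffineSubspace ℝ E} {T : Set E} {m : E} (hm : m ∈ A) (hT : T ⊆ A) (hT₀ : T.Nonempty)
    (h : ∀ f : StrongDual ℝ E, (∃ v ∈ A.direction, f v ≠ 0) → ∃ t ∈ T, f m < f t) :
    ∃ Q : Finset E, ↑Q ⊆ T ∧ Q.Nonempty ∧ ∃ r > 0, ∀ f : StrongDual ℝ E,
      f.comp A.direction.subtypeL ≠ 0 → ∃ q ∈ Q, r * ‖f.comp A.direction.subtypeL‖ < f (q - m) := by
  classical
  have hTV : ∀ t ∈ T, t - m ∈ A.direction := fun t ht =>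
    AffineSubspace.vsub_mem_direction (hT ht) hm
  obtain ⟨Q', hQ'T, r, hr, hQ'⟩ :=
    exists_finset_forall_mul_norm_lt (exists_add_mem_pos_of_ne_zero hTV h)
  obtain ⟨t₀, ht₀⟩ := hT₀
  -- `t₀` keeps `Q` nonempty when `A` is a point and the covering is empty
  refine ⟨insert t₀ (Q'.image fun v => ↑v + m), ?_, Finset.insert_nonempty _ _, r, hr,
    fun f hf => ?_⟩
  · rw [Finset.coe_insert, Finset.coe_image, Set.insert_subset_iff, Set.image_subset_iff]
    exact ⟨ht₀, fun v hv => hQ'T hv⟩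
  · obtain ⟨v, hvQ', hv⟩ := hQ' _ hf
    refine ⟨↑v + m, Finset.mem_insert_of_mem (Finset.mem_image_of_mem _ hvQ'), ?_⟩
    simpa using hv

theorem exists_finset_mem_convexHull_of_dist_lt [FiniteDimensional ℝ E]
    {A : AffineSubspace ℝ E} {T : Set E} {m : E} (hm : m ∈ A) (hT : T ⊆ A) (hT₀ : T.Nonempty)
    (h : ∀ f : StrongDual ℝ E, (∃ v ∈ A.direction, f v ≠ 0) → ∃ t ∈ T, f m < f t) :
    ∃ Q : Finset E, ↑Q ⊆ T ∧ ∃ ε > 0, ∀ y : E → E,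
      (∀ q ∈ Q, y q ∈ A ∧ dist (y q) q < ε) → m ∈ convexHull ℝ (y '' Q) := by
  obtain ⟨Q, hQT, hQ, r, hr, hdir⟩ := exists_finset_forall_mul_norm_lt_apply_sub hm hT hT₀ h
  exact ⟨Q, hQT, r, hr, fun y hy =>
    mem_convexHull_image_of_dist_lt hm (hQT.trans hT) hQ hdir hy⟩

end Geometry

theorem monte_carlo_cubature_relaxed_general {Ω' Ω : Type*} [MeasurableSpace Ω'] [MeasurableSpace Ω]
    (P : Measure Ω')
    (μ ν : Measure Ω) [IsProbabilityMeasure μ] [IsProbabilityMeasure ν]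
    (X : ℕ → Ω' → Ω) (hXm : ∀ k, Measurable (X k))
    (hindep : ProbabilityTheory.iIndepFun X P)
    (hlaw : ∀ k, P.map (X k) = ν)
    (D : ℕ) (φ : Ω → Fin D → ℝ) (hφ : Measurable φ)
    (hintμ : Integrable φ μ)
    (haff : affineSpan ℝ (measureSupport (ν.map φ)) = affineSpan ℝ (measureSupport (μ.map φ)))
    (hsupp : measureSupport (μ.map φ) ⊆ measureSupport (ν.map φ)) :
    ∀ᵐ ω' ∂P, ∃ n : ℕ, 0 < n ∧
      (fun i => ∫ ω, φ ω i ∂μ) ∈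
        convexHull ℝ {y : Fin D → ℝ | ∃ k < n, y = φ (X k ω')} := by
  have := Measure.isProbabilityMeasure_map (μ := μ) hφ.aemeasurable
  have := Measure.isProbabilityMeasure_map (μ := ν) hφ.aemeasurable
  have hint : Integrable id (μ.map φ) :=
    (integrable_map_measure aestronglyMeasurable_id hφ.aemeasurable).2 hintμ
  have hmean : (fun i => ∫ ω, φ ω i ∂μ) = ∫ z, z ∂(μ.map φ) := by
    rw [show ∫ z, z ∂(μ.map φ) = ∫ ω, φ ω ∂μ from
      integral_map hφ.aemeasurable aestronglyMeasurable_id]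
    ext i
    exact (ContinuousLinearMap.proj (R := ℝ) (φ := fun _ : Fin D => ℝ) i).integral_comp_comm hintμ
  rw [measureSupport_eq_support, measureSupport_eq_support] at haff hsupp
  obtain ⟨Q, hQT, ε, hε, hrobust⟩ := exists_finset_mem_convexHull_of_dist_lt
    (haff ▸ integral_mem_affineSpan_support _ hint) (subset_affineSpan ℝ _)
    (Measure.nonempty_support (IsProbabilityMeasure.ne_zero _)) fun f hf =>
      let ⟨s, hs, hlt⟩ := exists_mem_support_apply_integral_lt _ hint f (haff ▸ hf)
      ⟨s, hsupp hs, hlt⟩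
  have hhit : ∀ q ∈ Q, ∀ᵐ ω' ∂P, ∃ k, φ (X k ω') ∈ ball q ε ∩ (ν.map φ).support := by
    intro q hq
    have hB : MeasurableSet (ball q ε ∩ (ν.map φ).support) :=
      measurableSet_ball.inter Measure.isClosed_support.measurableSet
    refine (hindep.ae_frequently_mem hXm hlaw (hφ hB) ?_).mono fun ω' h => h.exists
    rw [← Measure.map_apply hφ hB, measure_inter_conull Measure.measure_compl_support]
    exact ((Measure.mem_support_iff_forall q).1 (hQT hq) _ (ball_mem_nhds q hε)).ne'
  filter_upwards [(ae_ball_iff Q.countable_toSet).2 hhit] with ω' hω'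
  choose! k hk using hω'
  refine ⟨Q.sup k + 1, Nat.succ_pos _, hmean ▸ convexHull_mono ?_ (hrobust _ fun q hq =>
    ⟨subset_affineSpan ℝ _ (hk q hq).2, (hk q hq).1⟩)⟩
  rintro _ ⟨q, hq, rfl⟩
  exact ⟨k q, Nat.lt_succ_of_le (Finset.le_sup hq), rfl⟩

/-- **Monte Carlo cubature with relaxed sampling distribution.**  If the i.i.d. samples
`X₁, X₂, …` have common law `ν` whose `φ`-image has the same affine-hull-of-support as
the law `μ` of `X` and a support containing that of `μ`, then almost surely some finite
initial segment of samples has `E[φ(X)]` in the convex hull of its `φ`-images. -/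
theorem monte_carlo_cubature_relaxed {Ω' Ω : Type*} [MeasurableSpace Ω'] [MeasurableSpace Ω]
    (P : Measure Ω') [IsProbabilityMeasure P]
    (μ ν : Measure Ω) [IsProbabilityMeasure μ] [IsProbabilityMeasure ν]
    (X : ℕ → Ω' → Ω) (hXm : ∀ k, Measurable (X k))
    (hindep : ProbabilityTheory.iIndepFun X P)
    (hlaw : ∀ k, P.map (X k) = ν)
    (D : ℕ) (φ : Ω → Fin D → ℝ) (hφ : Measurable φ)
    (hintμ : Integrable φ μ) (hintν : Integrable φ ν)
    (haff : affineSpan ℝ (measureSupport (ν.map φ)) = affineSpan ℝ (measureSupport (μ.map φ)))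
    (hsupp : measureSupport (μ.map φ) ⊆ measureSupport (ν.map φ)) :
    ∀ᵐ ω' ∂P, ∃ n : ℕ, 0 < n ∧
      (fun i => ∫ ω, φ ω i ∂μ) ∈
        convexHull ℝ {y : Fin D → ℝ | ∃ k < n, y = φ (X k ω')} :=
  monte_carlo_cubature_relaxed_general P μ ν X hXm hindep hlaw D φ hφ hintμ haff hsupp
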